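/- Let [l, u] ⊆ [l', u'] be nested closed real intervals with the same midpoint, l < u, and v a real with l ≤ v ≤ u. Then for p in [0, 1/2], (u − v)/(u − l) > p implies (u' − v)/(u' − l') > p; and for p in [1/2, 1], (u' − v)/(u' − l') > p implies (u − v)/(u − l) > p. -/

import Mathlib

/-! Widening `[l, u]` by `e = l - l'` on both sides adds `e` to the length above `v` and `2e` to the
total length, so the wide fraction is the mediant of the narrow one and `e / 2e = 1/2`. A mediant
lies between its two fractions: widening pushes the fraction towards `1/2`, so exceeding `p ≤ 1/2`
survives widening and exceeding `p ≥ 1/2` survives narrowing. -/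

section Mediant

variable {α : Type*} [Field α] [LinearOrder α] [IsStrictOrderedRing α] {a b c d p : α}

theorem lt_add_div_add_of_lt_div (hb : 0 < b) (hd : 0 ≤ d) (h : p < a / b) (hcd : p * d ≤ c) :
    p < (a + c) / (b + d) := by
  rw [lt_div_iff₀ hb] at h
  rw [lt_div_iff₀ (by linarith)]
  linarith

theorem lt_div_of_lt_add_div_add (hb : 0 < b) (hd : 0 ≤ d) (h : p < (a + c) / (b + d))
    (hcd : c ≤ p * d) : p < a / b := by
  rw [lt_div_iff₀ (by linarith)] at h
  rw [lt_div_iff₀ hb]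
  linarith

end Mediant

theorem nested_concentric_interval_trigger_general (l u l' u' v p : ℝ)
    (h1 : l' ≤ l) (h2 : l < u)
    (hmid : l + u = l' + u') :
    (0 ≤ p → p ≤ 1/2 → ((u - v) / (u - l) > p → (u' - v) / (u' - l') > p)) ∧
    (1/2 ≤ p → p ≤ 1 → ((u' - v) / (u' - l') > p → (u - v) / (u - l) > p)) := by
  set e := l - l'
  have he : 0 ≤ e := sub_nonneg.mpr h1
  have hlen : 0 < u - l := sub_pos.mpr h2
  have habove : u' - v = (u - v) + e := by linarith
  have hwidth : u' - l' = (u - l) + 2 * e := by linarith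
  rw [habove, hwidth]
  refine ⟨fun _ hp h => ?_, fun hp _ h => ?_⟩
  · exact lt_add_div_add_of_lt_div hlen (by positivity) h (by nlinarith)
  · exact lt_div_of_lt_add_div_add hlen (by positivity) h (by nlinarith)

theorem nested_concentric_interval_trigger (l u l' u' v p : ℝ)
    (h1 : l' ≤ l) (h2 : l < u) (h3 : u ≤ u')
    (hmid : l + u = l' + u') (hvl : l ≤ v) (hvu : v ≤ u) :
    (0 ≤ p → p ≤ 1/2 → ((u - v) / (u - l) > p → (u' - v) / (u' - l') > p)) ∧
    (1/2 ≤ p → p ≤ 1 → ((u' - v) / (u' - l') > p → (u - v) / (u - l) > p)) :=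
  nested_concentric_interval_trigger_general l u l' u' v p h1 h2 hmid
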